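/- arXiv:2009.07071 — 4 statements merged into one kernel-verified Lean document; each statement's English description precedes it below -/
import Mathlib

section
/- Let $G$ be a $2k$-connected graph and let $G'$ be a subgraph of $G$ whose graph is $k$-linked. Then $G$ is $k$-linked. -/
open SimpleGraph

/-- A graph is `k`-connected if it has more than `k` vertices and removing any set of
fewer than `k` vertices leaves it connected. -/
def KConnected {V : Type*} (G : SimpleGraph V) (k : ℕ) : Prop :=
  k < Nat.card V ∧ ∀ S : Finset V, S.card < k → (G.induce ((↑S : Set V)ᶜ)).Connected

/-- A graph with at least `2k` vertices is `k`-linked if every `2k` distinct vertices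
`s 1, t 1, …, s k, t k` can be joined by `k` pairwise vertex-disjoint paths,
with the `i`-th path joining `s i` to `t i`. -/
def KLinked {V : Type*} (G : SimpleGraph V) (k : ℕ) : Prop :=
  2 * k ≤ Nat.card V ∧
  ∀ s t : Fin k → V, Function.Injective (Sum.elim s t) →
    ∃ P : ∀ i : Fin k, G.Walk (s i) (t i),
      (∀ i, (P i).IsPath) ∧
      ∀ i j, i ≠ j → List.Disjoint (P i).support (P j).support

/-!
By Menger's theorem it suffices that no set of fewer than `2k` vertices separates the `2k`
terminals `s i, t i` from `V(G')`: removing such a set leaves `G` connected, and it can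
contain neither all terminals nor all of `V(G')`, which has at least `2k` vertices. Menger
then gives `2k` disjoint walks from the terminals to `G'`, each meeting `G'` only at its
end. Linking these `2k` ends inside `G'` in the pairs prescribed by the terminals and
prolonging by the walks to the terminals gives `k` disjoint walks, which are then shortened
to paths.

Menger's theorem is proved for an arbitrary relation by induction on the number of arcs.
If removing an arc `(x, y)` leaves a separator `S` with fewer than `n` vertices, then both
`S ∪ {x}` and `S ∪ {y}` are separators of size `n`. By induction there are `n` disjoint
chains from `A` to `S ∪ {x}` and `n` from `S ∪ {y}` to `B` avoiding the arc; any common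
vertex of two of them would give a chain from `A` to `B` avoiding `S` except at that vertex,
so they can be glued at `S` and along the arc `(x, y)`.
-/

open Function

namespace List

variable {α : Type*} {l : List α} {a : α} {p : α → Prop}

lemma exists_eq_append_cons_of_mem (ha : a ∈ l) (hpa : p a) :
    ∃ u b w, l = u ++ b :: w ∧ p b ∧ ∀ v ∈ u, ¬ p v := by
  classical
  obtain ⟨b, hb⟩ : ∃ b, l.find? (fun v => decide (p v)) = some b :=
    Option.isSome_iff_exists.mp (find?_isSome.mpr ⟨a, ha, by simpa using hpa⟩)
  obtain ⟨hpb, u, w, rfl, hu⟩ := find?_eq_some_iff_append.mp hb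
  exact ⟨u, b, w, rfl, by simpa using hpb, fun v hv => by simpa using hu v hv⟩

lemma exists_eq_append_cons_of_mem' (ha : a ∈ l) (hpa : p a) :
    ∃ u b w, l = u ++ b :: w ∧ p b ∧ ∀ v ∈ w, ¬ p v := by
  obtain ⟨u, b, w, hl, hpb, hu⟩ := exists_eq_append_cons_of_mem (mem_reverse.mpr ha) hpa
  exact ⟨w.reverse, b, u.reverse, by simpa using congrArg reverse hl, hpb,
    fun v hv => hu v (mem_reverse.mp hv)⟩

end List

lemma Set.injOn_update_id {V : Type*} [DecidableEq V] {C : Set V} {x y : V} (hy : y ∉ C) :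
    Set.InjOn (update id x y) (insert x C) := by
  intro a ha b hb hab
  by_cases hax : a = x <;> by_cases hbx : b = x
  · rw [hax, hbx]
  · rw [hax, update_self, update_of_ne hbx] at hab
    exact absurd (hab ▸ hb.resolve_left hbx) hy
  · rw [hbx, update_self, update_of_ne hax] at hab
    exact absurd (hab ▸ ha.resolve_left hax) hy
  · rwa [update_of_ne hax, update_of_ne hbx] at hab

namespace Menger

variable {V : Type*} {R R' : V → V → Prop} {A B C D : Set V} {S T : Finset V}
  {u w l : List V} {a b c v x y : V}

-- A walk from `A` to `B` along `R`, recorded by its vertices, which may repeat.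
structure IsChainFromTo (R : V → V → Prop) (A B : Set V) (l : List V) : Prop where
  isChain : l.IsChain R
  head_mem : ∃ a ∈ l.head?, a ∈ A
  getLast_mem : ∃ b ∈ l.getLast?, b ∈ B

def IsSeparator (R : V → V → Prop) (A B : Set V) (S : Finset V) : Prop :=
  ∀ l, IsChainFromTo R A B l → ∃ v ∈ l, v ∈ S

def IsLinkage {ι : Type*} (R : V → V → Prop) (A B : Set V) (P : ι → List V) : Prop :=
  (∀ i, IsChainFromTo R A B (P i)) ∧ Pairwise (List.Disjoint on P)

lemma IsChainFromTo.mono (h : IsChainFromTo R A B l) (hR : R ≤ R') : IsChainFromTo R' A B l :=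
  ⟨h.isChain.imp hR, h.head_mem, h.getLast_mem⟩

lemma IsLinkage.mono {ι : Type*} {P : ι → List V} (h : IsLinkage R A B P) (hR : R ≤ R') :
    IsLinkage R' A B P :=
  ⟨fun i => (h.1 i).mono hR, h.2⟩

lemma injective_of_pairwise_disjoint {ι : Type*} {P : ι → List V}
    (hP : Pairwise (List.Disjoint on P)) {g : ι → V} (hg : ∀ i, g i ∈ P i) :
    Injective g := by
  intro i j hij
  by_contra hne
  exact hP hne (hg i) (hij ▸ hg j)

lemma exists_eq_of_pairwise_disjoint {n : ℕ} {P : Fin n → List V}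
    (hP : Pairwise (List.Disjoint on P)) {g : Fin n → V} (hg : ∀ i, g i ∈ P i)
    (hgT : ∀ i, g i ∈ T) (hT : T.card ≤ n) (hv : v ∈ T) : ∃ i, g i = v := by
  obtain ⟨i, -, hi⟩ := Finset.surjOn_of_injOn_of_card_le (s := Finset.univ) g
    (fun i _ => hgT i) (injective_of_pairwise_disjoint hP hg).injOn (by simpa using hT) hv
  exact ⟨i, hi⟩

lemma exists_prefix_isChainFromTo (hl : l.IsChain R) (hA : ∃ a ∈ l.head?, a ∈ A)
    (hC : ∃ v ∈ l, v ∈ C) :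
    ∃ u c, u ++ [c] <+: l ∧ IsChainFromTo R A C (u ++ [c]) ∧ ∀ v ∈ u, v ∉ C := by
  obtain ⟨v, hv, hvC⟩ := hC
  obtain ⟨u, c, w, rfl, hc, hu⟩ := List.exists_eq_append_cons_of_mem hv hvC
  exact ⟨u, c, ⟨w, by simp⟩,
    ⟨(List.isChain_split.mp hl).1, by simpa using hA, ⟨c, by simp, hc⟩⟩, hu⟩

lemma exists_suffix_isChainFromTo (hl : l.IsChain R) (hB : ∃ b ∈ l.getLast?, b ∈ B)
    (hC : ∃ v ∈ l, v ∈ C) :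
    ∃ c w, c :: w <:+ l ∧ IsChainFromTo R C B (c :: w) ∧ ∀ v ∈ w, v ∉ C := by
  obtain ⟨v, hv, hvC⟩ := hC
  obtain ⟨u, c, w, rfl, hc, hw⟩ := List.exists_eq_append_cons_of_mem' hv hvC
  exact ⟨c, w, ⟨u, rfl⟩,
    ⟨(List.isChain_split.mp hl).2, ⟨c, by simp, hc⟩, by simpa using hB⟩, hw⟩

lemma IsLinkage.exists_append_singleton {ι : Type*} {P : ι → List V} (hP : IsLinkage R A B P) :
    ∃ (u : ι → List V) (b : ι → V),
      IsLinkage R A B (fun i => u i ++ [b i]) ∧ ∀ i, ∀ v ∈ u i, v ∉ B := by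
  choose u b hpre hchain hu using fun i =>
    let ⟨b, hb, hbB⟩ := (hP.1 i).getLast_mem
    exists_prefix_isChainFromTo (hP.1 i).isChain (hP.1 i).head_mem
      ⟨b, List.mem_of_mem_getLast? hb, hbB⟩
  exact ⟨u, b, ⟨hchain, fun i j hij v hvi hvj =>
    hP.2 hij ((hpre i).subset hvi) ((hpre j).subset hvj)⟩, hu⟩

lemma IsLinkage.exists_cons {ι : Type*} {P : ι → List V} (hP : IsLinkage R A B P) :
    ∃ (a : ι → V) (w : ι → List V),
      IsLinkage R A B (fun i => a i :: w i) ∧ ∀ i, ∀ v ∈ w i, v ∉ A := by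
  choose a w hsuf hchain hw using fun i =>
    let ⟨a, ha, haA⟩ := (hP.1 i).head_mem
    exists_suffix_isChainFromTo (hP.1 i).isChain (hP.1 i).getLast_mem
      ⟨a, List.mem_of_mem_head? ha, haA⟩
  exact ⟨a, w, ⟨hchain, fun i j hij v hvi hvj =>
    hP.2 hij ((hsuf i).subset hvi) ((hsuf j).subset hvj)⟩, hw⟩

lemma IsChainFromTo.join (h₁ : IsChainFromTo R A C (u ++ [a]))
    (h₂ : IsChainFromTo R D B (b :: w)) (hab : a = b ∨ R a b) :
    ∃ l, IsChainFromTo R A B l ∧ ∀ v ∈ l, v ∈ u ++ [a] ∨ v ∈ b :: w := by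
  rcases hab with rfl | hab
  · refine ⟨u ++ a :: w, ⟨List.isChain_split.mpr ⟨h₁.isChain, h₂.isChain⟩,
      by simpa using h₁.head_mem, by simpa using h₂.getLast_mem⟩, ?_⟩
    simp only [List.mem_append, List.mem_cons]
    tauto
  · refine ⟨u ++ a :: b :: w,
      ⟨List.isChain_append_cons_cons.mpr ⟨h₁.isChain, hab, h₂.isChain⟩,
      by simpa using h₁.head_mem, by simpa using h₂.getLast_mem⟩, ?_⟩
    simp only [List.mem_append, List.mem_cons]
    tauto

lemma IsSeparator.mem_of_mem_of_mem (hS : IsSeparator R A B S)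
    (h₁ : IsChainFromTo R A C (u ++ [a])) (hu : ∀ v ∈ u, v ∉ S)
    (h₂ : IsChainFromTo R D B (b :: w)) (hw : ∀ v ∈ w, v ∉ S)
    (hv₁ : v ∈ u ++ [a]) (hv₂ : v ∈ b :: w) : v ∈ S := by
  obtain ⟨u₁, u₂, hu₁⟩ := List.append_of_mem hv₁
  obtain ⟨w₁, w₂, hw₂⟩ := List.append_of_mem hv₂
  have hchain : (u₁ ++ v :: w₂).IsChain R := List.isChain_split.mpr
    ⟨(List.isChain_split.mp (hu₁ ▸ h₁.isChain)).1,
      (List.isChain_split.mp (hw₂ ▸ h₂.isChain)).2⟩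
  have hhead := h₁.head_mem
  have hlast := h₂.getLast_mem
  rw [hu₁] at hhead
  rw [hw₂] at hlast
  obtain ⟨s, hs, hsS⟩ := hS _ ⟨hchain, by simpa using hhead, by simpa using hlast⟩
  simp only [List.mem_append, List.mem_cons] at hs
  rcases hs with hs | rfl | hs
  · refine absurd hsS (hu s ?_)
    have := congrArg List.dropLast hu₁
    rw [List.dropLast_concat, List.dropLast_append_cons] at this
    exact this ▸ List.mem_append_left _ hs
  · exact hsS
  · refine absurd hsS (hw s ?_)
    cases w₁ with
    | nil => simp_all
    | cons c w₁ => simp_all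

lemma isChain_of_not_mem (hR : ∀ a b, R a b → R' a b ∨ a = x ∧ b = y) (hl : l.IsChain R)
    (hxy : x ∉ l ∨ y ∉ l) : l.IsChain R' :=
  hl.imp_of_mem_imp fun a b ha hb hab =>
    (hR a b hab).resolve_right (by rintro ⟨rfl, rfl⟩; tauto)

lemma isChain_append_singleton_of_not_mem (hR : ∀ a b, R a b → R' a b ∨ a = x ∧ b = y)
    (hl : (u ++ [c]).IsChain R) (hx : x ∉ u) : (u ++ [c]).IsChain R' := by
  refine List.isChain_iff_forall_rel_of_append_cons_cons.mpr fun a b l₁ l₂ heq => ?_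
  refine (hR a b (List.isChain_iff_forall_rel_of_append_cons_cons.mp hl heq)).resolve_right ?_
  rintro ⟨rfl, -⟩
  have := congrArg List.dropLast heq
  rw [List.dropLast_concat, List.dropLast_append_cons] at this
  exact hx (by simp [this])

lemma isChain_cons_of_not_mem (hR : ∀ a b, R a b → R' a b ∨ a = x ∧ b = y)
    (hl : (c :: w).IsChain R) (hy : y ∉ w) : (c :: w).IsChain R' :=
  hl.imp_of_mem_tail_imp fun a b _ hb hab =>
    (hR a b hab).resolve_right (by rintro ⟨-, rfl⟩; exact hy hb)

lemma IsSeparator.of_add_arc (hR : ∀ a b, R a b → R' a b ∨ a = x ∧ b = y)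
    (hS : IsSeparator R' A B S) (hST : S ⊆ T) (hT : x ∈ T ∨ y ∈ T) :
    IsSeparator R A B T := by
  intro l hl
  by_cases h : l.IsChain R'
  · obtain ⟨v, hv, hvS⟩ := hS l ⟨h, hl.head_mem, hl.getLast_mem⟩
    exact ⟨v, hv, hST hvS⟩
  · have hx : x ∈ l := by_contra fun hx => h (isChain_of_not_mem hR hl.isChain (.inl hx))
    have hy : y ∈ l := by_contra fun hy => h (isChain_of_not_mem hR hl.isChain (.inr hy))
    rcases hT with hT | hT
    exacts [⟨x, hx, hT⟩, ⟨y, hy, hT⟩]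

lemma IsSeparator.trans_left (hR : ∀ a b, R a b → R' a b ∨ a = x ∧ b = y)
    (hS : IsSeparator R A B S) (hx : x ∈ S) (hT : IsSeparator R' A S T) :
    IsSeparator R A B T := by
  intro l hl
  obtain ⟨u, c, hpre, hu, huS⟩ := exists_prefix_isChainFromTo hl.isChain hl.head_mem (hS l hl)
  obtain ⟨v, hv, hvT⟩ := hT _ ⟨isChain_append_singleton_of_not_mem hR hu.isChain
    (fun h => huS x h hx), hu.head_mem, hu.getLast_mem⟩
  exact ⟨v, hpre.subset hv, hvT⟩

lemma IsSeparator.trans_right (hR : ∀ a b, R a b → R' a b ∨ a = x ∧ b = y)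
    (hS : IsSeparator R A B S) (hy : y ∈ S) (hT : IsSeparator R' S B T) :
    IsSeparator R A B T := by
  intro l hl
  obtain ⟨c, w, hsuf, hw, hwS⟩ :=
    exists_suffix_isChainFromTo hl.isChain hl.getLast_mem (hS l hl)
  obtain ⟨v, hv, hvT⟩ := hT _ ⟨isChain_cons_of_not_mem hR hw.isChain
    (fun h => hwS y h hy), hw.head_mem, hw.getLast_mem⟩
  exact ⟨v, hsuf.subset hv, hvT⟩

lemma IsLinkage.glue [DecidableEq V] {n : ℕ} {u w : Fin n → List V} {p q : Fin n → V}
    (hP : IsLinkage R' A ↑(insert x S) (fun i => u i ++ [p i]))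
    (hu : ∀ i, ∀ v ∈ u i, v ∉ S)
    (hQ : IsLinkage R' ↑(insert y S) B (fun j => q j :: w j))
    (hw : ∀ j, ∀ v ∈ w j, v ∉ S)
    (hS : IsSeparator R' A B S) (hxS : x ∉ S) (hyS : y ∉ S) (hcard : (insert y S).card ≤ n)
    (hR' : R' ≤ R) (hxy : R x y) :
    ∃ P : Fin n → List V, IsLinkage R A B P := by
  have hp : ∀ i, p i ∈ insert x (S : Set V) := fun i => by simpa using (hP.1 i).getLast_mem
  have hpinj := injective_of_pairwise_disjoint hP.2 (g := p) (by simp)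
  have hqinj := injective_of_pairwise_disjoint hQ.2 (g := q) (by simp)
  -- a chain ending at `x` is continued along the arc by the one starting at `y`
  have hmaps : ∀ i, update id x y (p i) ∈ insert y S := fun i => by
    rcases hp i with h | h
    · simp [h]
    · simpa [update_of_ne (ne_of_mem_of_not_mem h hxS)] using .inr h
  choose σ hσ using fun i => exists_eq_of_pairwise_disjoint hQ.2 (g := q) (by simp)
    (fun j => by simpa using (hQ.1 j).head_mem) hcard (hmaps i)
  have hσinj : σ.Injective := fun i j hij =>
    hpinj (Set.injOn_update_id hyS (hp i) (hp j) (by rw [← hσ, ← hσ, hij]))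
  have hcross : ∀ i j v, v ∈ u i ++ [p i] → v ∈ q (σ j) :: w (σ j) → i = j := by
    intro i j v hvi hvj
    have hvS := hS.mem_of_mem_of_mem (hP.1 i) (hu i) (hQ.1 (σ j)) (hw (σ j)) hvi hvj
    have hpi : p i = v := by simpa [show v ∉ u i from fun h => hu i v h hvS, eq_comm] using hvi
    have hqj : q (σ j) = v := by
      simpa [show v ∉ w (σ j) from fun h => hw (σ j) v h hvS, eq_comm] using hvj
    refine hσinj (hqinj ?_)
    rw [hσ, hpi, update_of_ne (ne_of_mem_of_not_mem hvS hxS), id, hqj]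
  have hjoin : ∀ i, p i = q (σ i) ∨ R (p i) (q (σ i)) := fun i => by
    by_cases hx : p i = x
    · exact .inr (by rwa [hσ, hx, update_self])
    · exact .inl (by rw [hσ, update_of_ne hx, id])
  choose P hP' hPsub using fun i => ((hP.1 i).mono hR').join ((hQ.1 (σ i)).mono hR') (hjoin i)
  refine ⟨P, hP', fun i j hij v hvi hvj => ?_⟩
  rcases hPsub i v hvi with hvi | hvi <;> rcases hPsub j v hvj with hvj | hvj
  · exact hP.2 hij hvi hvj
  · exact hij (hcross i j v hvi hvj)
  · exact hij (hcross j i v hvj hvi).symm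
  · exact hQ.2 (hσinj.ne hij) hvi hvj

lemma exists_linkage_of_add_arc {n : ℕ} (hR' : R' ≤ R)
    (hR : ∀ a b, R a b → R' a b ∨ a = x ∧ b = y) (hxy : R x y)
    (ih : ∀ A B : Set V, (∀ S : Finset V, IsSeparator R' A B S → n ≤ S.card) →
      ∃ P : Fin n → List V, IsLinkage R' A B P)
    (h : ∀ S : Finset V, IsSeparator R A B S → n ≤ S.card) :
    ∃ P : Fin n → List V, IsLinkage R A B P := by
  classical
  by_cases h' : ∀ S : Finset V, IsSeparator R' A B S → n ≤ S.card
  · obtain ⟨P, hP⟩ := ih A B h'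
    exact ⟨P, hP.mono hR'⟩
  push Not at h'
  obtain ⟨S, hS, hSn⟩ := h'
  have hSx : IsSeparator R A B (insert x S) :=
    hS.of_add_arc hR (Finset.subset_insert _ _) (.inl (Finset.mem_insert_self _ _))
  have hSy : IsSeparator R A B (insert y S) :=
    hS.of_add_arc hR (Finset.subset_insert _ _) (.inr (Finset.mem_insert_self _ _))
  have hnot_mem : ∀ z, IsSeparator R A B (insert z S) → z ∉ S := fun z hz hzS => by
    have := h _ hz
    rw [Finset.insert_eq_of_mem hzS] at this
    omega
  obtain ⟨P, hP⟩ := ih A ((insert x S : Finset V) : Set V) fun T hT =>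
    h T (hSx.trans_left hR (Finset.mem_insert_self _ _) hT)
  obtain ⟨Q, hQ⟩ := ih ((insert y S : Finset V) : Set V) B fun T hT =>
    h T (hSy.trans_right hR (Finset.mem_insert_self _ _) hT)
  obtain ⟨u, p, hup, hu⟩ := hP.exists_append_singleton
  obtain ⟨q, w, hqw, hw⟩ := hQ.exists_cons
  exact hup.glue (fun i v hv hvS => hu i v hv (by simp [hvS]))
    hqw (fun j v hv hvS => hw j v hv (by simp [hvS])) hS (hnot_mem x hSx) (hnot_mem y hSy)
    ((Finset.card_insert_le _ _).trans hSn) hR' hxy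

lemma exists_linkage_of_forall_not_rel [Finite V] {n : ℕ} (hR : ∀ a b, ¬ R a b)
    (h : ∀ S : Finset V, IsSeparator R A B S → n ≤ S.card) :
    ∃ P : Fin n → List V, IsLinkage R A B P := by
  have hAB : IsSeparator R A B (A ∩ B).toFinite.toFinset := by
    rintro (_ | ⟨a, _ | ⟨b, l⟩⟩) ⟨hl, ⟨a', ha', ha'A⟩, ⟨b', hb', hb'B⟩⟩
    · cases ha'
    · simp_all
    · exact absurd (List.isChain_cons_cons.mp hl).1 (hR a b)
  obtain ⟨f, hf⟩ := Embedding.exists_of_card_le_finset (α := Fin n) (by simpa using h _ hAB)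
  refine ⟨fun i => [f i], fun i => ?_, fun i j hij => by simpa using (f.injective.ne hij).symm⟩
  obtain ⟨hA, hB⟩ : f i ∈ A ∩ B := by simpa using hf (Set.mem_range_self i)
  exact ⟨.singleton _, ⟨f i, rfl, hA⟩, ⟨f i, rfl, hB⟩⟩

theorem exists_linkage_of_le_card_isSeparator [Finite V] {n : ℕ}
    (h : ∀ S : Finset V, IsSeparator R A B S → n ≤ S.card) :
    ∃ P : Fin n → List V, IsLinkage R A B P := by
  obtain ⟨E, rfl⟩ : ∃ E : Set (V × V), R = fun a b => (a, b) ∈ E :=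
    ⟨{p | R p.1 p.2}, rfl⟩
  induction E, E.toFinite using Set.Finite.induction_on generalizing A B with
  | empty => exact exists_linkage_of_forall_not_rel (by simp) h
  | @insert e E _ _ ih =>
    refine exists_linkage_of_add_arc (R' := fun a b => (a, b) ∈ E) (x := e.1) (y := e.2)
      (fun a b hab => Set.mem_insert_of_mem _ hab) (fun a b hab => ?_) (by simp) (fun _ _ => ih) h
    rcases hab with hab | hab
    · exact .inr (Prod.ext_iff.mp hab)
    · exact .inl hab

theorem exists_fan [Finite V] {ι : Type*} [Fintype ι] {a : ι → V} (ha : Injective a)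
    (h : ∀ S : Finset V, IsSeparator R (Set.range a) B S → Fintype.card ι ≤ S.card) :
    ∃ (u : ι → List V) (b : ι → V), (∀ z, IsChainFromTo R {a z} B (u z ++ [b z])) ∧
      Pairwise (List.Disjoint on fun z => u z ++ [b z]) ∧ ∀ z, ∀ v ∈ u z, v ∉ B := by
  classical
  obtain ⟨P, hP⟩ := exists_linkage_of_le_card_isSeparator h
  obtain ⟨u, b, hub, hu⟩ := hP.exists_append_singleton
  choose hd hhd hhdA using fun i => (hub.1 i).head_mem
  choose ρ hρ using fun z => exists_eq_of_pairwise_disjoint hub.2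
    (fun i => List.mem_of_mem_head? (hhd i)) (T := Finset.univ.image a)
    (by simpa using hhdA) (Finset.card_image_le.trans (by simp)) (by simp : a z ∈ _)
  refine ⟨u ∘ ρ, b ∘ ρ, fun z => ⟨(hub.1 _).isChain, ⟨a z, hρ z ▸ hhd _, rfl⟩,
    (hub.1 _).getLast_mem⟩, fun z z' hzz' => hub.2 fun h => hzz' (ha ?_), fun z => hu _⟩
  rw [← hρ, ← hρ, h]

end Menger

open Menger

namespace SimpleGraph

variable {V : Type*} {G : SimpleGraph V} {A B : Set V} {a b c d : V}

lemma Walk.isChainFromTo_support (p : G.Walk a b) (ha : a ∈ A) (hb : b ∈ B) :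
    IsChainFromTo G.Adj A B p.support :=
  ⟨p.isChain_adj_support, ⟨a, by rw [← p.cons_tail_support]; rfl, ha⟩,
    ⟨b, by rw [List.getLast?_eq_some_getLast p.support_ne_nil, p.getLast_support]; rfl, hb⟩⟩

lemma exists_walk_of_isChainFromTo {l : List V} (h : IsChainFromTo G.Adj {a} {b} l) :
    ∃ p : G.Walk a b, p.support = l := by
  obtain ⟨a', ha', rfl⟩ := h.head_mem
  obtain ⟨b', hb', rfl⟩ := h.getLast_mem
  have hne : l ≠ [] := by rintro rfl; cases ha'
  have hhead := Option.some_injective _ ((List.head?_eq_some_head hne).symm.trans ha')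
  have hlast := Option.some_injective _ ((List.getLast?_eq_some_getLast hne).symm.trans hb')
  exact ⟨(Walk.ofSupport l hne h.isChain).copy hhead hlast, by simp⟩

lemma Walk.exists_isPath_support_subset (p : G.Walk a b) (m : G.Walk b c) (q : G.Walk d c) :
    ∃ P : G.Walk a d, P.IsPath ∧ P.support ⊆ p.support ++ m.support ++ q.support := by
  classical
  refine ⟨(p.append (m.append q.reverse)).bypass, bypass_isPath _, fun v hv => ?_⟩
  have := support_bypass_subset_support _ hv
  simp only [mem_support_append_iff, support_reverse, List.mem_reverse] at this
  simpa [or_assoc] using this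

end SimpleGraph

lemma KConnected.le_card_of_isSeparator {V : Type*} {G : SimpleGraph V} {m : ℕ} {A B : Set V}
    {S : Finset V} (hG : KConnected G m) (hA : m ≤ A.ncard) (hB : m ≤ B.ncard)
    (hS : IsSeparator G.Adj A B S) : m ≤ S.card := by
  by_contra! hSm
  have hout : ∀ C : Set V, m ≤ C.ncard → ∃ c ∈ C, c ∉ S := fun C hC => by
    by_contra! hCS
    have := Set.ncard_le_ncard (show C ⊆ S from hCS) S.finite_toSet
    rw [Set.ncard_coe_finset] at this
    omega
  obtain ⟨a, haA, haS⟩ := hout A hA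
  obtain ⟨b, hbB, hbS⟩ := hout B hB
  obtain ⟨p⟩ := (hG.2 S hSm).preconnected ⟨a, haS⟩ ⟨b, hbS⟩
  obtain ⟨v, hv, hvS⟩ := hS _ ((p.map (Embedding.induce _).toHom).isChainFromTo_support haA hbB)
  obtain ⟨v, -, rfl⟩ := List.mem_map.mp (by simpa only [Walk.support_map] using hv)
  exact v.2 hvS

lemma KLinked.exists_paths_of_fan {V : Type*} {G : SimpleGraph V} {H : G.Subgraph} {k : ℕ}
    (hH : KLinked H.coe k) {s t : Fin k → V} {u : Fin k ⊕ Fin k → List V}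
    {b : Fin k ⊕ Fin k → V}
    (hub : ∀ z, IsChainFromTo G.Adj {Sum.elim s t z} H.verts (u z ++ [b z]))
    (hdisj : Pairwise (List.Disjoint on fun z => u z ++ [b z]))
    (hu : ∀ z, ∀ v ∈ u z, v ∉ H.verts) :
    ∃ P : ∀ i, G.Walk (s i) (t i),
      (∀ i, (P i).IsPath) ∧ ∀ i j, i ≠ j → List.Disjoint (P i).support (P j).support := by
  have hb : ∀ z, b z ∈ H.verts := fun z => by simpa using (hub z).getLast_mem
  have hwalk : ∀ z, IsChainFromTo G.Adj {Sum.elim s t z} {b z} (u z ++ [b z]) :=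
    fun z => ⟨(hub z).isChain, (hub z).head_mem, ⟨b z, by simp, rfl⟩⟩
  choose p hp using fun i => exists_walk_of_isChainFromTo (a := s i) (hwalk (.inl i))
  choose q hq using fun i => exists_walk_of_isChainFromTo (a := t i) (hwalk (.inr i))
  obtain ⟨c, hc⟩ : ∃ c : Fin k ⊕ Fin k → H.verts, ∀ z, H.hom (c z) = b z :=
    ⟨fun z => ⟨b z, hb z⟩, fun _ => rfl⟩
  have hcinj : Injective c := fun z z' h =>
    injective_of_pairwise_disjoint hdisj (g := b) (by simp) (by rw [← hc, ← hc, h])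
  obtain ⟨W, -, hWdisj⟩ := hH.2 (c ∘ Sum.inl) (c ∘ Sum.inr) (by rwa [Sum.elim_comp_inl_inr])
  choose P hP hPsupp using fun i =>
    (p i).exists_isPath_support_subset (((W i).map H.hom).copy (hc _) (hc _)) (q i)
  have hmem : ∀ i v, v ∈ (P i).support →
      (∃ v' ∈ (W i).support, H.hom v' = v) ∨ v ∈ u (.inl i) ∨ v ∈ u (.inr i) := by
    intro i v hv
    have := hPsupp i hv
    simp only [Walk.support_copy, Walk.support_map, hp, hq, List.mem_append, List.mem_map,
      List.mem_singleton] at this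
    rcases this with ((hv | rfl) | hv) | hv | rfl
    · exact .inr (.inl hv)
    · exact .inl ⟨_, (W i).start_mem_support, hc _⟩
    · exact .inl hv
    · exact .inr (.inr hv)
    · exact .inl ⟨_, (W i).end_mem_support, hc _⟩
  refine ⟨P, hP, fun i j hij v hvi hvj => ?_⟩
  rcases hmem i v hvi with ⟨v₁, h₁, hv₁⟩ | h₁ <;>
    rcases hmem j v hvj with ⟨v₂, h₂, hv₂⟩ | h₂
  · exact hWdisj i j hij h₁ (Subtype.ext (hv₁.trans hv₂.symm) ▸ h₂)
  · rcases h₂ with h₂ | h₂ <;> exact hu _ v h₂ (hv₁ ▸ v₁.2)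
  · rcases h₁ with h₁ | h₁ <;> exact hu _ v h₁ (hv₂ ▸ v₂.2)
  · rcases h₁ with h₁ | h₁ <;> rcases h₂ with h₂ | h₂ <;>
      exact hdisj (by simp [hij]) (List.mem_append_left _ h₁) (List.mem_append_left _ h₂)

theorem stmt_2 {V : Type*} (G : SimpleGraph V) (k : ℕ)
    (hG : KConnected G (2 * k)) (H : G.Subgraph) (hH : KLinked H.coe k) :
    KLinked G k := by
  have : Finite V := Nat.finite_of_card_ne_zero (Nat.ne_zero_of_lt hG.1)
  refine ⟨hG.1.le, fun s t hst => ?_⟩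
  have hsep : ∀ S : Finset V, IsSeparator G.Adj (Set.range (Sum.elim s t)) H.verts S →
      Fintype.card (Fin k ⊕ Fin k) ≤ S.card := fun S hS => by
    have := hG.le_card_of_isSeparator (by rw [Set.ncard_range_of_injective hst]; simp [two_mul])
      (by rw [← Nat.card_coe_set_eq]; exact hH.1) hS
    simpa [two_mul] using this
  obtain ⟨u, b, hub, hdisj, hu⟩ := exists_fan hst hsep
  exact hH.exists_paths_of_fan hub hdisj hu
end

section
/- Let $Z$ be a nonempty subset of the vertex set $\{0,1\}^d$ of the $d$-cube. Then the number of coordinate directions $i \in \{1, \ldots, d\}$ for which there exists a vertex $z \in Z$ such that the vertex obtained from $z$ by flipping the $i$-th coordinate is also in $Z$ is at most $|Z| - 1$. -/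
open Finset

theorem stmt_3 (d : ℕ) (Z : Finset (Fin d → Bool)) (hZ : Z.Nonempty) :
    (Finset.univ.filter fun i : Fin d =>
        ∃ z ∈ Z, Function.update z i (!z i) ∈ Z).card ≤ Z.card - 1 := by
  induction d with
  | zero =>
      simp
  | succ d ih =>
      classical
      -- fibers
      set Z0 : Finset (Fin d → Bool) :=
        (Z.filter (fun z => z 0 = false)).image Fin.tail with hZ0def
      set Z1 : Finset (Fin d → Bool) :=
        (Z.filter (fun z => z 0 = true)).image Fin.tail with hZ1def
      have tail_inj : ∀ b : Bool,
          Set.InjOn (Fin.tail : (Fin (d+1) → Bool) → (Fin d → Bool))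
          ↑(Z.filter (fun z => z 0 = b)) := by
        intro b z hz w hw h
        simp only [coe_filter, Set.mem_setOf_eq] at hz hw
        funext i
        refine Fin.cases ?_ ?_ i
        · rw [hz.2, hw.2]
        · intro j; exact congrFun h j
      have hc0 : Z0.card = (Z.filter (fun z => z 0 = false)).card :=
        Finset.card_image_of_injOn (tail_inj false)
      have hc1 : Z1.card = (Z.filter (fun z => z 0 = true)).card :=
        Finset.card_image_of_injOn (tail_inj true)
      have hsplit : (Z.filter (fun z => z 0 = false)).card
          + (Z.filter (fun z => z 0 = true)).card = Z.card := by
        have h := Finset.card_filter_add_card_filter_not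
          (s := Z) (p := fun z => z 0 = false)
        have heq : Z.filter (fun z => ¬ z 0 = false)
            = Z.filter (fun z => z 0 = true) := by
          apply Finset.filter_congr; intro z _; simp
        rw [← heq]; exact h
      -- membership in fiber
      have mem_fiber : ∀ z ∈ Z, Fin.tail z ∈ (if z 0 then Z1 else Z0) := by
        intro z hz
        cases hb : z 0 <;> simp only [if_true, if_false, hZ0def, hZ1def] <;>
          exact Finset.mem_image_of_mem _ (Finset.mem_filter.2 ⟨hz, hb⟩)
      -- direction transfer
      have dir_transfer : ∀ i : Fin d,
          (∃ z ∈ Z, Function.update z i.succ (!z i.succ) ∈ Z) →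
          (∃ z ∈ Z0, Function.update z i (!z i) ∈ Z0) ∨
          (∃ z ∈ Z1, Function.update z i (!z i) ∈ Z1) := by
        intro i ⟨z, hz, hz'⟩
        have h0 : Function.update z i.succ (!z i.succ) 0 = z 0 := by
          rw [Function.update_of_ne]
          exact (Fin.succ_ne_zero i).symm
        have htail : Fin.tail (Function.update z i.succ (!z i.succ))
            = Function.update (Fin.tail z) i (!(Fin.tail z i)) := by
          rw [Fin.tail_update_succ]; rfl
        have h1 := mem_fiber z hz
        have h2 := mem_fiber _ hz'
        rw [h0, htail] at h2
        cases hb : z 0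
        · left; exact ⟨Fin.tail z, by rw [hb] at h1; simpa using h1,
            by rw [hb] at h2; simpa using h2⟩
        · right; exact ⟨Fin.tail z, by rw [hb] at h1; simpa using h1,
            by rw [hb] at h2; simpa using h2⟩
      -- the sets of directions
      set D : Finset (Fin (d+1)) :=
        univ.filter (fun i => ∃ z ∈ Z, Function.update z i (!z i) ∈ Z) with hD
      set Q : Finset (Fin d) :=
        univ.filter (fun i => ∃ z ∈ Z, Function.update z i.succ (!z i.succ) ∈ Z)
        with hQ
      set D0 : Finset (Fin d) :=
        univ.filter (fun i => ∃ z ∈ Z0, Function.update z i (!z i) ∈ Z0) with hD0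
      set D1 : Finset (Fin d) :=
        univ.filter (fun i => ∃ z ∈ Z1, Function.update z i (!z i) ∈ Z1) with hD1
      have hQsub : Q ⊆ D0 ∪ D1 := by
        intro i hi
        rcases dir_transfer i (by simpa [hQ] using hi) with h | h
        · exact Finset.mem_union_left _ (by simp [hD0, h])
        · exact Finset.mem_union_right _ (by simp [hD1, h])
      have hQcard : Q.card ≤ D0.card + D1.card :=
        le_trans (Finset.card_le_card hQsub) (Finset.card_union_le _ _)
      have hDsub : D ⊆ insert 0 (Q.image Fin.succ) := by
        intro i hi
        rcases Fin.eq_zero_or_eq_succ i with rfl | ⟨j, rfl⟩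
        · exact Finset.mem_insert_self _ _
        · refine Finset.mem_insert_of_mem (Finset.mem_image_of_mem _ ?_)
          simpa [hQ, hD] using hi
      have hQimg : (Q.image Fin.succ).card = Q.card :=
        Finset.card_image_of_injective _ (Fin.succ_injective d)
      by_cases h0 : (Z.filter (fun z => z 0 = false)).Nonempty
      · by_cases h1 : (Z.filter (fun z => z 0 = true)).Nonempty
        · -- both fibers nonempty
          have hZ0ne : Z0.Nonempty := h0.image _
          have hZ1ne : Z1.Nonempty := h1.image _
          have i0 : D0.card ≤ Z0.card - 1 := ih Z0 hZ0ne
          have i1 : D1.card ≤ Z1.card - 1 := ih Z1 hZ1ne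
          have hcard0 : 1 ≤ Z0.card := Finset.card_pos.2 hZ0ne
          have hcard1 : 1 ≤ Z1.card := Finset.card_pos.2 hZ1ne
          have hDcard : D.card ≤ Q.card + 1 := by
            calc D.card ≤ (insert 0 (Q.image Fin.succ)).card :=
                  Finset.card_le_card hDsub
              _ ≤ (Q.image Fin.succ).card + 1 := Finset.card_insert_le _ _
              _ = Q.card + 1 := by rw [hQimg]
          clear hZ0def hZ1def tail_inj mem_fiber dir_transfer hD hQ hD0 hD1
          clear_value D Q D0 D1
          rw [hc0] at i0 hcard0
          rw [hc1] at i1 hcard1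
          clear hZ hZ0ne hZ1ne h0 h1 hQsub hDsub hQimg hc0 hc1
          clear Z1 Z0 ih
          generalize (Finset.filter (fun z => z 0 = false) Z).card = a
            at hsplit hcard0 i0
          generalize (Finset.filter (fun z => z 0 = true) Z).card = b
            at hsplit hcard1 i1
          omega
        · -- all vertices have z 0 = false
          rw [Finset.not_nonempty_iff_eq_empty] at h1
          have hall : ∀ z ∈ Z, z 0 = false := by
            intro z hz
            by_contra h
            have : z ∈ Z.filter (fun z => z 0 = true) :=
              Finset.mem_filter.2 ⟨hz, by revert h; cases z 0 <;> simp⟩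
            simp [h1] at this
          have hZ1e : Z1 = ∅ := by rw [hZ1def, h1]; simp
          have hP0 : (0 : Fin (d+1)) ∉ D := by
            simp only [hD, Finset.mem_filter, Finset.mem_univ, true_and]
            rintro ⟨z, hz, hz'⟩
            have := hall _ hz'
            rw [Function.update_self, hall z hz] at this
            simp at this
          have hDsub' : D ⊆ Q.image Fin.succ := by
            intro i hi
            rcases Finset.mem_insert.1 (hDsub hi) with h | h
            · exact absurd (h ▸ hi) hP0
            · exact h
          have hQ0 : Q ⊆ D0 := by
            intro i hi
            rcases dir_transfer i (by simpa [hQ] using hi) with h | h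
            · simp [hD0, h]
            · obtain ⟨z, hz, -⟩ := h
              rw [hZ1e] at hz
              simp at hz
          have hZ0ne : Z0.Nonempty := h0.image _
          have i0 : D0.card ≤ Z0.card - 1 := ih Z0 hZ0ne
          have hcard : D.card ≤ D0.card := by
            calc D.card ≤ (Q.image Fin.succ).card := Finset.card_le_card hDsub'
              _ = Q.card := hQimg
              _ ≤ D0.card := Finset.card_le_card hQ0
          have h1c : (Z.filter (fun z => z 0 = true)).card = 0 := by
            rw [h1]; rfl
          rw [hc0] at i0
          clear hZ0def hZ1def tail_inj mem_fiber dir_transfer hD hQ hD0 hD1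
          clear_value D Q D0 D1
          clear hZ hZ0ne h0 hQsub hDsub hDsub' hQimg hc0 hc1 hQ0 hP0 hall h1 hZ1e
          clear Z1 Z0 ih
          generalize (Finset.filter (fun z => z 0 = false) Z).card = a
            at hsplit i0
          generalize (Finset.filter (fun z => z 0 = true) Z).card = b
            at hsplit h1c
          omega
      · -- all vertices have z 0 = true (symmetric)
        rw [Finset.not_nonempty_iff_eq_empty] at h0
        have hall : ∀ z ∈ Z, z 0 = true := by
          intro z hz
          by_contra h
          have : z ∈ Z.filter (fun z => z 0 = false) :=
            Finset.mem_filter.2 ⟨hz, by revert h; cases z 0 <;> simp⟩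
          simp [h0] at this
        have hZ0e : Z0 = ∅ := by rw [hZ0def, h0]; simp
        have hP0 : (0 : Fin (d+1)) ∉ D := by
          simp only [hD, Finset.mem_filter, Finset.mem_univ, true_and]
          rintro ⟨z, hz, hz'⟩
          have := hall _ hz'
          rw [Function.update_self, hall z hz] at this
          simp at this
        have hDsub' : D ⊆ Q.image Fin.succ := by
          intro i hi
          rcases Finset.mem_insert.1 (hDsub hi) with h | h
          · exact absurd (h ▸ hi) hP0
          · exact h
        have hQ1 : Q ⊆ D1 := by
          intro i hi
          rcases dir_transfer i (by simpa [hQ] using hi) with h | h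
          · obtain ⟨z, hz, -⟩ := h
            rw [hZ0e] at hz
            simp at hz
          · simp [hD1, h]
        have hZ1ne : Z1.Nonempty := by
          obtain ⟨z, hz⟩ := hZ
          exact ⟨Fin.tail z, Finset.mem_image_of_mem _
            (Finset.mem_filter.2 ⟨hz, hall z hz⟩)⟩
        have i1 : D1.card ≤ Z1.card - 1 := ih Z1 hZ1ne
        have hcard : D.card ≤ D1.card := by
          calc D.card ≤ (Q.image Fin.succ).card := Finset.card_le_card hDsub'
            _ = Q.card := hQimg
            _ ≤ D1.card := Finset.card_le_card hQ1
        have h0c : (Z.filter (fun z => z 0 = false)).card = 0 := by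
          rw [h0]; rfl
        rw [hc1] at i1
        clear hZ0def hZ1def tail_inj mem_fiber dir_transfer hD hQ hD0 hD1
        clear_value D Q D0 D1
        clear hZ hZ1ne hQsub hDsub hDsub' hQimg hc0 hc1 hQ1 hP0 hall h0 hZ0e
        clear Z1 Z0 ih
        generalize (Finset.filter (fun z => z 0 = false) Z).card = a
          at hsplit h0c
        generalize (Finset.filter (fun z => z 0 = true) Z).card = b
          at hsplit i1
        omega
end

section
/- Let $S$ be a set of exactly $d$ vertices in the graph of the $d$-cube (the hypercube graph $Q_d$ on $\{0,1\}^d$) such that removing $S$ disconnects the graph. Then $S$ is an independent set: no two vertices of $S$ are adjacent in $Q_d$. -/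
open SimpleGraph

/-- The hypercube graph `Q d` on `{0,1}^d`: two vertices are adjacent iff they differ in
exactly one coordinate. -/
def Q (d : ℕ) : SimpleGraph (Fin d → Bool) where
  Adj x y := hammingDist x y = 1
  symm := ⟨fun x y h => by simpa [hammingDist_comm] using h⟩
  loopless := ⟨fun x h => by simp [hammingDist_self] at h⟩

/-!
Let `u, v ∈ S` differ in coordinate `i`. Splitting `Q d` along `i` gives two copies of `Q (d-1)`,
each containing one of `u, v`, hence at most `d - 1` vertices of `S`. By induction with the same
splitting, an `n`-dimensional subcube minus fewer than `n` vertices stays connected. If both halves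
lose fewer than `d - 1` vertices, both stay connected, and since `u` and `v` block the same one of
the `2 ^ (d-1)` crossing edges, some crossing edge survives. Otherwise the half of `v` meets `S`
only in `v`, stays connected for `d ≥ 3`, and every vertex of the other half outside `S` is joined
to it by its crossing edge, since the only vertex whose partner is `v` is `u ∈ S`. Either way
`Q d` minus `S` is connected, so `S` separates nothing; `d = 2` is checked directly.
-/

open Finset Function

namespace SimpleGraph
variable {V : Type*} {G : SimpleGraph V} {s t : Set V}

lemma connected_induce_union_of_forall_exists_adj (hs : (G.induce s).Connected)
    (ht : ∀ v ∈ t, ∃ w ∈ s, G.Adj w v) : (G.induce (s ∪ t)).Connected := by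
  obtain ⟨⟨u, hu⟩⟩ := hs.nonempty
  refine induce_connected_of_patches u (Or.inl hu) fun {v} hv => ?_
  rcases hv with hv | hv
  · exact ⟨s, Set.subset_union_left, hu, hv, hs.preconnected _ _⟩
  · obtain ⟨w, hw, hwv⟩ := ht v hv
    have : (G.induce (s ∪ {v})).Connected :=
      connected_induce_union hs.preconnected (by simp) hw rfl hwv
    exact ⟨s ∪ {v}, Set.union_subset_union_right s (by simpa using hv), Or.inl hu, Or.inr rfl,
      this.preconnected _ _⟩

lemma Connected.exists_walk_support_subset_of_induce (h : (G.induce s).Connected) {a b : V}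
    (ha : a ∈ s) (hb : b ∈ s) : ∃ p : G.Walk a b, ∀ z ∈ p.support, z ∈ s := by
  obtain ⟨p⟩ := h.preconnected ⟨a, ha⟩ ⟨b, hb⟩
  have hp : ∀ z ∈ (p.map (Embedding.induce s).toHom).support, z ∈ s := by
    rw [Walk.support_map]; simp +contextual
  exact ⟨_, hp⟩

end SimpleGraph

namespace Q
variable {d : ℕ}

lemma adj_update (x : Fin d → Bool) {i : Fin d} {c : Bool} (hc : c ≠ x i) :
    (Q d).Adj x (update x i c) := by
  change hammingDist _ _ = 1
  rw [hammingDist, card_eq_one]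
  exact ⟨i, by ext k; by_cases hk : k = i <;> simp [hk, hc.symm]⟩

lemma exists_eq_update_of_adj {u v : Fin d → Bool} (h : (Q d).Adj u v) :
    ∃ i, v = update u i (!u i) := by
  obtain ⟨i, hi⟩ := card_eq_one.1 (show hammingDist u v = 1 from h)
  refine ⟨i, funext fun k => ?_⟩
  have hk := congrArg (k ∈ ·) hi
  simp only [mem_filter, mem_univ, true_and, mem_singleton, eq_iff_iff] at hk
  by_cases hki : k = i
  · subst hki; simpa using Bool.eq_not.2 (Ne.symm (hk.2 rfl))
  · simpa [hki] using (not_not.1 (mt hk.1 hki)).symm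

def subcube (F : Finset (Fin d)) (x : Fin d → Bool) : Finset (Fin d → Bool) :=
  {z | ∀ k ∉ F, z k = x k}

variable {F : Finset (Fin d)} {x z : Fin d → Bool} {i : Fin d}

@[simp] lemma mem_subcube : z ∈ subcube F x ↔ ∀ k ∉ F, z k = x k := by simp [subcube]

lemma mem_subcube_self (F : Finset (Fin d)) (x : Fin d → Bool) : x ∈ subcube F x := by simp

@[simp] lemma subcube_empty (x : Fin d → Bool) : subcube ∅ x = {x} := by
  ext z; simp [funext_iff]

@[simp] lemma subcube_univ (x : Fin d → Bool) : subcube univ x = univ := by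
  ext z; simp

lemma subcube_insert (hi : i ∉ F) (x : Fin d → Bool) :
    subcube (insert i F) x = subcube F x ∪ subcube F (update x i (!x i)) := by
  ext z
  simp only [mem_subcube, mem_insert, not_or, mem_union, and_imp]
  constructor
  · intro hz
    by_cases hzi : z i = x i
    · exact Or.inl fun k hk => if hki : k = i then hki ▸ hzi else hz k hki hk
    · refine Or.inr fun k hk => ?_
      by_cases hki : k = i
      · subst hki; simpa [Bool.eq_not] using hzi
      · simpa [hki] using hz k hki hk
  · rintro (hz | hz) k hki hk
    · exact hz k hk
    · simpa [hki] using hz k hk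

lemma disjoint_subcube_update (hi : i ∉ F) (x : Fin d → Bool) :
    Disjoint (subcube F x) (subcube F (update x i (!x i))) := by
  refine disjoint_left.2 fun z hz hz' => ?_
  have := (mem_subcube.1 hz' i hi).symm.trans (mem_subcube.1 hz i hi)
  simp at this

lemma card_subcube (F : Finset (Fin d)) (x : Fin d → Bool) : #(subcube F x) = 2 ^ #F := by
  induction F using Finset.induction_on generalizing x with
  | empty => simp
  | insert i F hi ih =>
    rw [subcube_insert hi, card_union_of_disjoint (disjoint_subcube_update hi x), ih, ih,
      card_insert_of_notMem hi, pow_succ, mul_two]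

lemma update_mem_subcube_update (hz : z ∈ subcube F x) (i : Fin d) (c : Bool) :
    update z i c ∈ subcube F (update x i c) := by
  simp only [mem_subcube] at hz ⊢
  intro k hk
  by_cases hki : k = i
  · subst hki; simp
  · simp [hki, hz k hk]

lemma subcube_insert_update (x : Fin d → Bool) (i : Fin d) (c : Bool) :
    subcube (insert i F) (update x i c) = subcube (insert i F) x := by
  ext z
  simp only [mem_subcube, mem_insert, not_or, and_imp]
  refine forall_congr' fun k => imp_congr_right fun hki => ?_
  simp [hki]

variable {T : Finset (Fin d → Bool)}

lemma connected_induce_subcube_insert_of_halves (hi : i ∉ F)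
    (h₀ : ((Q d).induce ↑(subcube F x \ T)).Connected)
    (h₁ : ((Q d).induce ↑(subcube F (update x i (!x i)) \ T)).Connected)
    (hT : #((T ∩ subcube (insert i F) x).image (update · i (x i))) < 2 ^ #F) :
    ((Q d).induce ↑(subcube (insert i F) x \ T)).Connected := by
  -- the crossing edge at `z ∈ subcube F x` is blocked only if `z` is a projection of `T`
  rw [← card_subcube F x] at hT
  obtain ⟨z, hz, hz_img⟩ := exists_mem_notMem_of_card_lt_card hT
  have hzi : z i = x i := mem_subcube.1 hz i hi
  have hz_ins : ∀ {y}, y ∈ subcube F x ∪ subcube F (update x i (!x i)) →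
      y ∈ subcube (insert i F) x := fun hy => (subcube_insert hi x).symm ▸ hy
  have hzT : z ∉ T := fun hzT =>
    hz_img (mem_image.2 ⟨z, mem_inter.2 ⟨hzT, hz_ins (mem_union_left _ hz)⟩, by simp [← hzi]⟩)
  have hz' := update_mem_subcube_update hz i (!x i)
  have hz'T : update z i (!x i) ∉ T := fun hz'T =>
    hz_img (mem_image.2 ⟨_, mem_inter.2 ⟨hz'T, hz_ins (mem_union_right _ hz')⟩, by simp [← hzi]⟩)
  rw [subcube_insert hi, union_sdiff_distrib, coe_union]
  exact connected_induce_union h₀.preconnected h₁.preconnected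
    (mem_sdiff.2 ⟨hz, hzT⟩) (mem_sdiff.2 ⟨hz', hz'T⟩) (adj_update z (by simp [hzi]))

lemma connected_induce_subcube_insert_of_mates (hi : i ∉ F)
    (h₀ : ((Q d).induce ↑(subcube F x \ T)).Connected)
    (hmate : ∀ z ∈ subcube F (update x i (!x i)), z ∉ T → update z i (x i) ∉ T) :
    ((Q d).induce ↑(subcube (insert i F) x \ T)).Connected := by
  rw [subcube_insert hi, union_sdiff_distrib, coe_union]
  refine connected_induce_union_of_forall_exists_adj h₀ fun z hz => ?_
  obtain ⟨hz, hzT⟩ := mem_sdiff.1 hz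
  have hzi : z i = !x i := by simpa using mem_subcube.1 hz i hi
  refine ⟨update z i (x i), mem_sdiff.2 ⟨?_, hmate z hz hzT⟩, (adj_update z ?_).symm⟩
  · simpa using update_mem_subcube_update hz i (x i)
  · simp [hzi]

lemma connected_induce_subcube (F : Finset (Fin d)) (x : Fin d → Bool) :
    ((Q d).induce ↑(subcube F x)).Connected := by
  induction F using Finset.induction_on generalizing x with
  | empty => rw [subcube_empty, coe_singleton, induce_singleton_eq_top]; exact connected_top
  | insert i F hi ih =>
    have := connected_induce_subcube_insert_of_halves (T := ∅) (x := x) hi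
      (by rw [sdiff_empty]; exact ih x) (by rw [sdiff_empty]; exact ih _) (by simp)
    rwa [sdiff_empty] at this

lemma connected_induce_subcube_insert_of_disjoint (hi : i ∉ F) (hT : Disjoint T (subcube F x)) :
    ((Q d).induce ↑(subcube (insert i F) x \ T)).Connected := by
  refine connected_induce_subcube_insert_of_mates hi ?_ fun z hz _ hzT => ?_
  · rw [sdiff_eq_self_of_disjoint hT.symm]
    exact connected_induce_subcube F x
  · exact disjoint_left.1 hT hzT (by simpa using update_mem_subcube_update hz i (x i))

theorem connected_induce_subcube_sdiff (hT : #(T ∩ subcube F x) < #F) :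
    ((Q d).induce ↑(subcube F x \ T)).Connected := by
  induction F using Finset.induction_on generalizing x with
  | empty => simp at hT
  | insert i F hi ih =>
    rw [card_insert_of_notMem hi] at hT
    have hsplit : #(T ∩ subcube F x) + #(T ∩ subcube F (update x i (!x i))) < #F + 1 := by
      rwa [← card_union_of_disjoint
        ((disjoint_subcube_update hi x).mono inter_subset_right inter_subset_right),
        ← inter_union_distrib_left, ← subcube_insert hi]
    by_cases h : #(T ∩ subcube F x) < #F ∧ #(T ∩ subcube F (update x i (!x i))) < #F
    · refine connected_induce_subcube_insert_of_halves hi (ih h.1) (ih h.2) ?_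
      calc _ ≤ #(T ∩ subcube (insert i F) x) := card_image_le
        _ ≤ #F := Nat.lt_succ_iff.1 hT
        _ < 2 ^ #F := Nat.lt_two_pow_self
    · -- one half contains all of the obstacles, so the other contains none
      rcases not_and_or.1 h with h | h
      · rw [← subcube_insert_update x i (!x i)]
        refine connected_induce_subcube_insert_of_disjoint hi (disjoint_iff_inter_eq_empty.2 ?_)
        exact card_eq_zero.1 (by omega)
      · refine connected_induce_subcube_insert_of_disjoint hi (disjoint_iff_inter_eq_empty.2 ?_)
        exact card_eq_zero.1 (by omega)

variable {S : Finset (Fin d → Bool)} {u : Fin d → Bool}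

theorem connected_induce_compl_of_card_le (hd : 3 ≤ d) (hS : #S = d) (hu : u ∈ S)
    (hv : update u i (!u i) ∈ S)
    (hle : #(S ∩ subcube (univ.erase i) (update u i (!u i))) ≤ #(S ∩ subcube (univ.erase i) u)) :
    ((Q d).induce ↑Sᶜ).Connected := by
  generalize hv_def : update u i (!u i) = v at hv hle
  have hvi : (!v i) = u i := by simp [← hv_def]
  have hvu : update v i (u i) = u := by simp [← hv_def]
  have hi : i ∉ univ.erase i := notMem_erase i univ
  have hF : #(univ.erase i) = d - 1 := by simp [card_erase_of_mem]
  have hcompl : ∀ x, (↑Sᶜ : Set (Fin d → Bool)) = ↑(subcube (insert i (univ.erase i)) x \ S) := by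
    simp [compl_eq_univ_sdiff]
  have hsplit : #(S ∩ subcube (univ.erase i) u) + #(S ∩ subcube (univ.erase i) v) = d := by
    rw [← hv_def, ← card_union_of_disjoint
      ((disjoint_subcube_update hi u).mono inter_subset_right inter_subset_right),
      ← inter_union_distrib_left, ← subcube_insert hi, insert_erase (mem_univ i), subcube_univ,
      inter_univ, hS]
  have hv₁ : 0 < #(S ∩ subcube (univ.erase i) v) :=
    card_pos.2 ⟨v, mem_inter.2 ⟨hv, mem_subcube_self _ v⟩⟩
  by_cases h : #(S ∩ subcube (univ.erase i) u) < d - 1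
  · rw [hcompl u]
    have h₁ : ((Q d).induce ↑(subcube (univ.erase i) (update u i (!u i)) \ S)).Connected := by
      rw [hv_def]; exact connected_induce_subcube_sdiff (by omega)
    refine connected_induce_subcube_insert_of_halves hi (connected_induce_subcube_sdiff (by omega))
      h₁ ?_
    -- `u` and `v` block the same crossing edge
    have huv : u ≠ v := hv_def ▸ (adj_update u (by simp)).ne
    calc _ ≤ #((S.erase v).image (update · i (u i))) := card_le_card fun w hw => ?_
      _ ≤ #(S.erase v) := card_image_le
      _ = d - 1 := by rw [card_erase_of_mem hv, hS]
      _ < 2 ^ #(univ.erase i) := hF ▸ Nat.lt_two_pow_self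
    obtain ⟨t, ht, rfl⟩ := mem_image.1 hw
    by_cases htv : t = v
    · exact mem_image.2 ⟨u, mem_erase.2 ⟨huv, hu⟩, by simp [htv, ← hv_def]⟩
    · exact mem_image.2 ⟨t, mem_erase.2 ⟨htv, (mem_inter.1 ht).1⟩, rfl⟩
  · obtain ⟨w, hw⟩ := card_eq_one.1 (show #(S ∩ subcube (univ.erase i) v) = 1 by omega)
    obtain rfl : v = w := mem_singleton.1 (hw ▸ mem_inter.2 ⟨hv, mem_subcube_self _ v⟩)
    rw [hcompl v]
    refine connected_induce_subcube_insert_of_mates hi (connected_induce_subcube_sdiff (by omega))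
      fun z hz hzS hmateS => hzS ?_
    rw [hvi, hvu] at hz
    have hmate : update z i (v i) = v := by
      have := update_mem_subcube_update hz i (v i)
      rw [← hvu, update_idem, update_eq_self] at this
      simpa [hw] using mem_inter.2 ⟨hmateS, this⟩
    have hzi : z i = u i := mem_subcube.1 hz i hi
    have hz : z = u := by rw [← hvu, ← hmate, update_idem, ← hzi, update_eq_self]
    exact hz ▸ hu

theorem connected_induce_compl_of_adj (hd : 3 ≤ d) (hS : #S = d) {v : Fin d → Bool} (hu : u ∈ S)
    (hv : v ∈ S) (huv : (Q d).Adj u v) : ((Q d).induce ↑Sᶜ).Connected := by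
  obtain ⟨i, rfl⟩ := exists_eq_update_of_adj huv
  rcases le_total #(S ∩ subcube (univ.erase i) (update u i (!u i)))
    #(S ∩ subcube (univ.erase i) u) with h | h
  · exact connected_induce_compl_of_card_le hd hS hu hv h
  · exact connected_induce_compl_of_card_le (i := i) hd hS hv (by simpa using hu) (by simpa using h)

lemma two_adj_of_notMem_pair :
    ∀ u v a b : Fin 2 → Bool, (Q 2).Adj u v → a ∉ ({u, v} : Finset _) →
      b ∉ ({u, v} : Finset _) → a ≠ b → (Q 2).Adj a b := by
  unfold Q; decide

lemma exists_walk_avoiding_of_adj (hS : #S = d) {v a b : Fin d → Bool} (hu : u ∈ S)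
    (hv : v ∈ S) (huv : (Q d).Adj u v) (ha : a ∉ S) (hb : b ∉ S) :
    ∃ p : (Q d).Walk a b, ∀ z ∈ p.support, z ∉ S := by
  obtain hd | rfl | hd : 3 ≤ d ∨ d = 2 ∨ d < 2 := by omega
  · simpa using
      (connected_induce_compl_of_adj hd hS hu hv huv).exists_walk_support_subset_of_induce
        (by simpa using ha) (by simpa using hb)
  · have hS' : S = {u, v} := (eq_of_subset_of_card_le (by simp [insert_subset_iff, hu, hv])
      (by simp [card_pair huv.ne, hS])).symm
    by_cases hab : a = b
    · subst hab; exact ⟨.nil, by simpa using ha⟩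
    · exact ⟨.cons (two_adj_of_notMem_pair u v a b huv (hS' ▸ ha) (hS' ▸ hb) hab) .nil,
        by simp [ha, hb]⟩
  · have := card_le_card (insert_subset hu (singleton_subset_iff.2 hv))
    rw [card_pair huv.ne] at this
    omega

end Q

theorem stmt_4 (d : ℕ) (S : Finset (Fin d → Bool)) (hcard : S.card = d)
    (a b : Fin d → Bool) (ha : a ∉ S) (hb : b ∉ S)
    (hsep : ∀ p : (Q d).Walk a b, ∃ v ∈ p.support, v ∈ S) :
    ∀ u ∈ S, ∀ v ∈ S, ¬ (Q d).Adj u v := by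
  intro u hu v hv huv
  obtain ⟨p, hp⟩ := Q.exists_walk_avoiding_of_adj hcard hu hv huv ha hb
  obtain ⟨z, hz, hzS⟩ := hsep p
  exact hp z hz hzS
end

section
/- Suppose a set $X$ of six vertices of the hypercube graph $Q_3$ is organised into three unordered pairs $\{s_1,t_1\}, \{s_2,t_2\}, \{s_3,t_3\}$. Then there exist two of the pairs, say $\{s_i,t_i\}$ and $\{s_j,t_j\}$ with $i \ne j$, such that the four vertices $s_i, s_j, t_i, t_j$ do not appear in this cyclic order on a $4$-cycle of $Q_3$ bounding a $2$-face of the $3$-cube. -/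
open SimpleGraph

/-- The four vertices `a b c d` appear in this cyclic order on the `4`-cycle bounding a
`2`-face of the `3`-cube: they all lie in a common `2`-face (some coordinate is constant)
and consecutive ones are adjacent around the cycle. -/
def CyclicOnSquare (a b c d : Fin 3 → Bool) : Prop :=
  ∃ (i : Fin 3) (ε : Bool), a i = ε ∧ b i = ε ∧ c i = ε ∧ d i = ε ∧
    (Q 3).Adj a b ∧ (Q 3).Adj b c ∧ (Q 3).Adj c d ∧ (Q 3).Adj d a

/-!
If every two of the pairs lay in cyclic order `s i, s j, t i, t j` on a face, then `s 1`, `t 1`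
and `s 2` would be three distinct common neighbours of `s 0 ≠ t 0`. In any hypercube a common
neighbour of `x ≠ y` is `x` with one coordinate flipped, the flipped coordinate being one where
`x` and `y` differ; since `x` and `y` are at Hamming distance at most `2`, there are at most two.
-/

open Finset

section

variable {d : ℕ}

theorem Q.exists_eq_update_of_adj_s9 {x u : Fin d → Bool} (h : (Q d).Adj x u) :
    ∃ i, u = Function.update x i (!x i) := by
  obtain ⟨i, hi⟩ := card_eq_one.mp (show #{j | x j ≠ u j} = 1 from h)
  refine ⟨i, funext fun j => ?_⟩
  have hj : x j ≠ u j ↔ j = i := by simpa using congrArg (j ∈ ·) hi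
  by_cases hji : j = i
  · subst hji
    simpa using Bool.eq_not_of_ne (hj.mpr rfl).symm
  · simpa [hji, eq_comm] using hj

theorem Q.exists_eq_update_of_mem_commonNeighbors {x y u : Fin d → Bool} (hxy : x ≠ y)
    (hu : u ∈ (Q d).commonNeighbors x y) :
    ∃ i, x i ≠ y i ∧ u = Function.update x i (!x i) := by
  obtain ⟨i, rfl⟩ := Q.exists_eq_update_of_adj_s9 hu.1
  obtain ⟨j, hj⟩ := Q.exists_eq_update_of_adj_s9 hu.2
  refine ⟨i, fun hi => hxy (funext fun k => ?_), rfl⟩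
  have hji : j = i := by
    by_contra hji
    have hxi := congrFun hj i
    rw [Function.update_self, Function.update_of_ne (Ne.symm hji), ← hi] at hxi
    exact Bool.not_ne_self _ hxi
  subst hji
  by_cases hk : k = j
  · exact hk ▸ hi
  · simpa [hk] using congrFun hj k

theorem Q.ncard_commonNeighbors_le_two {x y : Fin d → Bool} (hxy : x ≠ y) :
    ((Q d).commonNeighbors x y).ncard ≤ 2 := by
  obtain h | ⟨u, hu⟩ := ((Q d).commonNeighbors x y).eq_empty_or_nonempty
  · simp [h]
  have hsub : (Q d).commonNeighbors x y ⊆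
      (({i | x i ≠ y i} : Finset (Fin d)).image fun i => Function.update x i (!x i) : Set _) := by
    intro v hv
    obtain ⟨i, hi, rfl⟩ := Q.exists_eq_update_of_mem_commonNeighbors hxy hv
    simpa using ⟨i, hi, rfl⟩
  calc ((Q d).commonNeighbors x y).ncard
      ≤ (({i | x i ≠ y i} : Finset (Fin d)).image fun i => Function.update x i (!x i)).card := by
        rw [← Set.ncard_coe_finset]
        exact Set.ncard_le_ncard hsub
    _ ≤ hammingDist x y := card_image_le
    _ ≤ hammingDist x u + hammingDist y u := hammingDist_triangle_right x y u
    _ = 2 := by rw [show hammingDist x u = 1 from hu.1, show hammingDist y u = 1 from hu.2]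

end

theorem CyclicOnSquare.mem_commonNeighbors {a b c e : Fin 3 → Bool}
    (h : CyclicOnSquare a b c e) :
    b ∈ (Q 3).commonNeighbors a c ∧ e ∈ (Q 3).commonNeighbors a c := by
  obtain ⟨-, -, -, -, -, -, hab, hbc, hce, hea⟩ := h
  exact ⟨⟨hab, hbc.symm⟩, ⟨hea.symm, hce⟩⟩

theorem stmt_9 (s t : Fin 3 → Fin 3 → Bool)
    (hinj : Function.Injective (Sum.elim s t)) :
    ∃ i j, i ≠ j ∧ ¬ CyclicOnSquare (s i) (s j) (t i) (t j) := by
  by_contra! h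
  have hne : ∀ a b : Fin 3 ⊕ Fin 3, a ≠ b → Sum.elim s t a ≠ Sum.elim s t b :=
    fun _ _ => hinj.ne
  obtain ⟨hs₁, ht₁⟩ := (h 0 1 (by decide)).mem_commonNeighbors
  obtain ⟨hs₂, -⟩ := (h 0 2 (by decide)).mem_commonNeighbors
  have hthree : ({s 1, t 1, s 2} : Set (Fin 3 → Bool)).ncard = 3 :=
    Set.ncard_eq_three.mpr ⟨_, _, _, hne (.inl 1) (.inr 1) (by simp),
      hne (.inl 1) (.inl 2) (by simp), hne (.inr 1) (.inl 2) (by simp), rfl⟩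
  have hsub : ({s 1, t 1, s 2} : Set (Fin 3 → Bool)) ⊆ (Q 3).commonNeighbors (s 0) (t 0) := by
    simp [Set.insert_subset_iff, hs₁, ht₁, hs₂]
  have := (Set.ncard_le_ncard hsub).trans
    (Q.ncard_commonNeighbors_le_two (hne (.inl 0) (.inr 0) (by simp)))
  omega
end
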